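/- In the single-service scalar threshold model h_θ(x) = sign(x + θ) with utility u(x, θ) = min(x + θ, 1) and hinge-type loss ℓ(θ, x, y) = max(0, 1 - y(x + θ)): for n users with features x_k = -0.7·k (k = 0,...,n-1), all labeled +1, and initial θ(0) = 0.5, exactly one new user receives positive utility at each timestep under the dynamics where the classifier moves minimally to achieve zero loss on observed users; hence convergence to a zero-loss state takes at least n timesteps. -/

import Mathlib

/-!
With `x k = -a k` and `1/2 ≤ a < 1`, the users with positive utility under `θ ∈ (a t, a (t+1)]`
are exactly `0, …, t`. Retraining to zero loss on them moves `θ` to `1 + a t`, which lies in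
`(a (t+1), a (t+2)]`, so exactly one more user becomes active; and the newest active user `t`
has margin `θ - a t ≤ a < 1`, so it still incurs positive loss.
-/

open Set

section

variable {n t : ℕ} {a θ : ℝ} {x : Fin n → ℝ}

def initialSegment (n t : ℕ) : Finset (Fin n) :=
  Finset.univ.filter fun k => (k : ℕ) ≤ t

theorem card_initialSegment (ht : t < n) : (initialSegment n t).card = t + 1 := by
  have : initialSegment n t = Finset.Iic (⟨t, ht⟩ : Fin n) := by
    ext k
    simp [initialSegment, Fin.le_def]
  rw [this, Fin.card_Iic]

theorem filter_pos_eq_initialSegment (hx : ∀ k, x k = -a * k)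
    (hθ : θ ∈ Ioc (a * t) (a * (t + 1))) :
    (Finset.univ.filter fun k => 0 < x k + θ) = initialSegment n t := by
  obtain ⟨hlo, hhi⟩ := hθ
  have ha : 0 < a := by nlinarith
  ext k
  simp only [initialSegment, Finset.mem_filter, Finset.mem_univ, true_and, hx]
  constructor
  · intro hk
    by_contra! htk
    have : (t : ℝ) + 1 ≤ k := by exact_mod_cast htk
    nlinarith
  · intro hkt
    have : (k : ℝ) ≤ t := by exact_mod_cast hkt
    nlinarith

theorem fold_max_initialSegment (hx : ∀ k, x k = -a * k) (ha : 0 ≤ a) (ht : t < n)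
    (hθ : θ ≤ 1 + a * t) :
    (initialSegment n t).fold max θ (fun k => 1 - x k) = 1 + a * t := by
  apply le_antisymm
  · refine (Finset.fold_max_le _).2 ⟨hθ, fun k hk => ?_⟩
    have : (k : ℝ) ≤ t := by exact_mod_cast (Finset.mem_filter.1 hk).2
    rw [hx]
    nlinarith
  · refine (Finset.le_fold_max _).2 (Or.inr ⟨⟨t, ht⟩, by simp [initialSegment], ?_⟩)
    simp [hx]

theorem one_add_mul_mem_Ioc (ha : 1 / 2 ≤ a) (ha' : a < 1) :
    1 + a * t ∈ Ioc (a * ((t + 1 : ℕ) : ℝ)) (a * ((t + 1 : ℕ) + 1)) := by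
  push_cast
  constructor <;> nlinarith

theorem retraining_invariant (hx : ∀ k, x k = -a * k) (ha : 1 / 2 ≤ a) (ha' : a < 1)
    {θ : ℕ → ℝ} (hθ0 : θ 0 ∈ Ioc 0 a) {O : ℕ → Finset (Fin n)}
    (hO0 : O 0 = Finset.univ.filter fun k => 0 < x k + θ 0)
    (hOrec : ∀ t, O (t + 1) = O t ∪ (Finset.univ.filter fun k => 0 < x k + θ (t + 1)))
    (hθrec : ∀ t, θ (t + 1) = Finset.fold max (θ t) (fun k => 1 - x k) (O t)) :
    ∀ t < n, θ t ∈ Ioc (a * t) (a * (t + 1)) ∧ O t = initialSegment n t := by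
  intro t
  induction t with
  | zero =>
    intro _
    have hθ : θ 0 ∈ Ioc (a * (0 : ℕ)) (a * ((0 : ℕ) + 1)) := by simpa using hθ0
    exact ⟨hθ, hO0.trans (filter_pos_eq_initialSegment hx hθ)⟩
  | succ t ih =>
    intro ht
    obtain ⟨⟨hlo, hhi⟩, hOt⟩ := ih (by omega)
    have hstep : θ (t + 1) = 1 + a * t := by
      rw [hθrec, hOt]
      exact fold_max_initialSegment hx (by linarith) (by omega) (by nlinarith)
    have hθ := hstep ▸ one_add_mul_mem_Ioc (t := t) ha ha'
    refine ⟨hθ, ?_⟩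
    rw [hOrec, hOt, filter_pos_eq_initialSegment hx hθ]
    ext k
    simp only [initialSegment, Finset.mem_union, Finset.mem_filter, Finset.mem_univ, true_and]
    omega

end

/-- Single-service scalar threshold model. Users `x k = -0.7·k`
(`k = 0,…,n-1`, all labeled `+1`), initial `θ 0 = 0.5`. The service retrains to the
minimum-change parameter achieving zero loss (`x + θ ≥ 1`) on all users observed so
far (`O t`, those with positive utility at some past time), and a user has positive
utility iff `x k + θ > 0`. Then at each timestep `t < n`, exactly `t + 1` users
receive positive utility (one new user per step), and the state is not zero-loss
(some user with positive utility incurs positive loss); hence convergence takes at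
least `n` timesteps. -/
theorem stmt_16 (n : ℕ)
    (x : Fin n → ℝ) (hx : ∀ k : Fin n, x k = -(0.7) * (k : ℝ))
    (θ : ℕ → ℝ) (hθ0 : θ 0 = 0.5)
    (O : ℕ → Finset (Fin n))
    (hO0 : O 0 = Finset.univ.filter fun k => 0 < x k + θ 0)
    (hOrec : ∀ t, O (t + 1) = O t ∪ (Finset.univ.filter fun k => 0 < x k + θ (t + 1)))
    (hθrec : ∀ t, θ (t + 1) = Finset.fold max (θ t) (fun k => 1 - x k) (O t)) :
    ∀ t < n,
      ((Finset.univ.filter fun k => 0 < x k + θ t).card = t + 1) ∧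
      (∃ k : Fin n, 0 < x k + θ t ∧ 0 < max (0 : ℝ) (1 - (x k + θ t))) := by
  intro t ht
  have hθ0' : θ 0 ∈ Ioc (0 : ℝ) 0.7 := by rw [hθ0]; norm_num
  obtain ⟨⟨hlo, hhi⟩, -⟩ :=
    retraining_invariant hx (by norm_num) (by norm_num) hθ0' hO0 hOrec hθrec t ht
  refine ⟨by rw [filter_pos_eq_initialSegment hx ⟨hlo, hhi⟩, card_initialSegment ht],
    ⟨t, ht⟩, ?_, lt_max_of_lt_right ?_⟩ <;>
  · simp only [hx]
    linarith
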